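/- arXiv:1111.6416 — 5 statements merged into one kernel-verified Lean document; each statement's English description precedes it below -/
import Mathlib

section
/- For N ≥ 2 and p > 0, let f ∈ L^p(𝕋, λ) satisfy f(η^N)^N = Π_{ζ^N=1} f(ζη) for λ-almost all η ∈ 𝕋. Then |f| is constant λ-almost everywhere. -/
/-!
Put `G = |f|^p`. Taking norms in the functional equation shows that `G(η^N)` is the geometric
mean of the values `G(ζη)`, `ζ^N = 1`. Their arithmetic mean has the same integral as `G`, and so
has `G(η^N)`, since rotations and `η ↦ η^N` preserve `λ`. Hence AM-GM is an equality almost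
everywhere, which forces `G(ζη) = G(η^N)` for all `ζ`; taking `ζ = 1` gives `G(η^N) = G(η)`, and
ergodicity of `η ↦ η^N` makes `G` almost everywhere constant. On `ℝ/ℤ`, `η^N` reads `N • η`
and `ζη` reads `η + k/N`.
-/

open MeasureTheory Finset

lemma MeasureTheory.MeasurePreserving.integral_comp_of_aestronglyMeasurable
    {α β E : Type*} [MeasurableSpace α] [MeasurableSpace β] [NormedAddCommGroup E]
    [NormedSpace ℝ E] {μ : Measure α} {ν : Measure β} {T : α → β}
    (hT : MeasurePreserving T μ ν) {g : β → E} (hg : AEStronglyMeasurable g ν) :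
    ∫ x, g (T x) ∂μ = ∫ y, g y ∂ν := by
  rw [← integral_map hT.aemeasurable (hT.map_eq ▸ hg), hT.map_eq]

lemma Real.rpow_eq_prod_rpow_of_pow_eq_prod {ι : Type*} {s : Finset ι} {x : ℝ} {y : ι → ℝ}
    {n : ℕ} (hn : n ≠ 0) (hx : 0 ≤ x) (hy : ∀ i ∈ s, 0 ≤ y i) (h : x ^ n = ∏ i ∈ s, y i)
    (p : ℝ) : x ^ p = ∏ i ∈ s, (y i ^ p) ^ (1 / n : ℝ) := by
  have hn' : (n : ℝ) ≠ 0 := Nat.cast_ne_zero.2 hn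
  calc x ^ p = (x ^ n) ^ (p / n) := by
        rw [← Real.rpow_natCast, ← Real.rpow_mul hx, mul_div_cancel₀ _ hn']
    _ = ∏ i ∈ s, y i ^ (p / n) := by
        rw [h, Real.finsetProd_rpow _ _ hy]
    _ = ∏ i ∈ s, (y i ^ p) ^ (1 / n : ℝ) := by
        refine prod_congr rfl fun i hi => ?_
        rw [← Real.rpow_mul (hy i hi), mul_one_div]

/-- Integrating AM-GM leaves no room for a strict inequality on a set of positive measure. -/
theorem ae_comp_eq_of_comp_eq_geom_mean {α ι : Type*} [MeasurableSpace α] {μ : Measure α}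
    {s : Finset ι} {T : α → α} {τ : ι → α → α} (hT : MeasurePreserving T μ μ)
    (hτ : ∀ i ∈ s, MeasurePreserving (τ i) μ μ) {G : α → ℝ} (hG0 : ∀ x, 0 ≤ G x)
    (hG : Integrable G μ) (hGT : ∀ᵐ x ∂μ, G (T x) = ∏ i ∈ s, G (τ i x) ^ (1 / #s : ℝ)) :
    ∀ᵐ x ∂μ, ∀ i ∈ s, G (τ i x) = G (T x) := by
  rcases s.eq_empty_or_nonempty with rfl | hs
  · simp
  have hw : ∀ i ∈ s, (0 : ℝ) < 1 / #s := fun _ _ => by positivity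
  have hw_sum : ∑ _i ∈ s, (1 / #s : ℝ) = 1 := by
    rw [sum_const, nsmul_eq_mul]
    field_simp
  set GM : α → ℝ := fun x => ∏ i ∈ s, G (τ i x) ^ (1 / #s : ℝ)
  set AM : α → ℝ := fun x => ∑ i ∈ s, 1 / #s * G (τ i x)
  have hGτ : ∀ i ∈ s, Integrable (fun x => G (τ i x)) μ := fun i hi =>
    ((hτ i hi).integrable_comp hG.aestronglyMeasurable).2 hG
  have hGM_int : Integrable GM μ :=
    ((hT.integrable_comp hG.aestronglyMeasurable).2 hG).congr hGT
  have hAM_int : Integrable AM μ := integrable_finsetSum _ fun i hi => (hGτ i hi).const_mul _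
  have hGM_le : GM ≤ᵐ[μ] AM := Filter.Eventually.of_forall fun x =>
    Real.geom_mean_le_arith_mean_weighted s _ _ (fun i hi => (hw i hi).le) hw_sum
      fun i _ => hG0 _
  have h_integral : ∫ x, GM x ∂μ = ∫ x, AM x ∂μ := by
    calc ∫ x, GM x ∂μ = ∫ x, G (T x) ∂μ := integral_congr_ae (hGT.mono fun _ h => h.symm)
      _ = ∫ x, G x ∂μ := hT.integral_comp_of_aestronglyMeasurable hG.aestronglyMeasurable
      _ = ∑ i ∈ s, 1 / #s * ∫ x, G (τ i x) ∂μ := by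
        rw [sum_congr rfl fun i hi =>
          by rw [(hτ i hi).integral_comp_of_aestronglyMeasurable hG.aestronglyMeasurable],
          ← sum_mul, hw_sum, one_mul]
      _ = ∫ x, AM x ∂μ := by
        rw [integral_finsetSum _ fun i hi => (hGτ i hi).const_mul _]
        simp only [integral_const_mul]
  filter_upwards [(integral_eq_iff_of_ae_le hGM_int hAM_int hGM_le).1 h_integral, hGT]
    with x hx hxT i hi
  rw [hxT, show ∏ i ∈ s, G (τ i x) ^ (1 / #s : ℝ) = AM x from hx]
  exact (Real.geom_mean_eq_arith_mean_weighted_iff_of_pos' s _ _ hw hw_sum fun i _ => hG0 _).1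
    hx i hi

/-- For `N ≥ 2` and `p > 0`, if `f ∈ L^p` of the circle (modelled as `ℝ/ℤ` with Haar
probability measure) satisfies `f(η^N)^N = Π_{ζ^N=1} f(ζη)` for a.e. `η`
(additively: `f(N•η)^N = Π_{k<N} f(η + k/N)`), then `|f|` is a.e. constant. -/
theorem stmt_5 (N : ℕ) (hN : 2 ≤ N) (p : ℝ) (hp : 0 < p) (f : UnitAddCircle → ℂ)
    (hf : MemLp f (ENNReal.ofReal p) (volume : Measure UnitAddCircle))
    (heq : ∀ᵐ η : UnitAddCircle ∂volume,
      f (N • η) ^ N = ∏ k ∈ Finset.range N, f (η + (((k : ℝ) / N : ℝ) : UnitAddCircle))) :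
    ∃ c : ℝ, ∀ᵐ η : UnitAddCircle ∂volume, ‖f η‖ = c := by
  set G : UnitAddCircle → ℝ := fun η => ‖f η‖ ^ p
  have hG : Integrable G := by
    simpa [ENNReal.toReal_ofReal hp.le] using
      hf.integrable_norm_rpow (ENNReal.ofReal_pos.2 hp).ne' ENNReal.ofReal_ne_top
  have hE : Ergodic (fun η : UnitAddCircle => N • η) := AddCircle.ergodic_nsmul (by omega)
  have hGT : ∀ᵐ η, G (N • η) = ∏ k ∈ range N, G (η + ((k / N : ℝ) : UnitAddCircle)) ^
      (1 / #(range N) : ℝ) := by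
    filter_upwards [heq] with η hη
    rw [card_range]
    exact Real.rpow_eq_prod_rpow_of_pow_eq_prod (by omega) (norm_nonneg _)
      (fun _ _ => norm_nonneg _) (by rw [← norm_pow, hη, norm_prod]) p
  have h_rot := ae_comp_eq_of_comp_eq_geom_mean hE.toMeasurePreserving
    (fun k _ => measurePreserving_add_right _ _) (fun _ => by positivity) hG hGT
  obtain ⟨C, hC⟩ := hE.ae_eq_const_of_ae_eq_comp_ae hG.aestronglyMeasurable <| by
    filter_upwards [h_rot] with η hη
    simpa using (hη 0 (mem_range.2 (by omega))).symm
  refine ⟨C ^ p⁻¹, ?_⟩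
  filter_upwards [hC] with η hη
  rw [← Real.rpow_rpow_inv (norm_nonneg (f η)) hp.ne']
  exact congrArg (· ^ p⁻¹) hη
end

section
/- If a finite positive Borel measure μ on 𝕋 satisfies (φ_N)^*μ = μ for some N ≥ 2, where (φ_N)^*μ = (1/N)·Σ_{k=0}^{N−1} (i_k)_*((φ_N|_{I_k})^{−1})_*μ is the pullback along φ_N, then μ = μ(𝕋)·λ is a scalar multiple of Haar measure. -/
/-!
The `N` branches of `φ_N⁻¹` over a point differ by the `N`-th roots of unity, so the Fourier
coefficients of the pullback are `ĉ_n((φ_N)^*μ) = ĉ_{n/N}(μ)` when `N ∣ n` and `0` otherwise.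
For an invariant measure, descending along `n ↦ n / N` kills every coefficient with `n ≠ 0`;
these are also the coefficients of Haar measure, and by Stone–Weierstrass a finite measure on
the circle is determined by its Fourier coefficients.
-/

open MeasureTheory

/-- The inverse of `φ_N` restricted to the arc `I_k` (with arcs parametrized by `(0,1]`
in the model `𝕋 = ℝ/ℤ`), viewed as a map `𝕋 → 𝕋`: a representative `t ∈ (0,1]` of `x`
is sent to `(t + k)/N ∈ I_k`. -/
noncomputable def circleSection (N k : ℕ) (x : UnitAddCircle) : UnitAddCircle :=
  ((((AddCircle.equivIoc (1 : ℝ) 0) x).1 + k) / N : ℝ)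

/-- The pullback `(φ_N)^*μ = (1/N)·Σ_{k=0}^{N−1} (i_k)_*((φ_N|_{I_k})^{−1})_*μ`. -/
noncomputable def circlePullback (N : ℕ) (μ : Measure UnitAddCircle) :
    Measure UnitAddCircle :=
  (N : ENNReal)⁻¹ • ∑ k ∈ Finset.range N, Measure.map (circleSection N k) μ

namespace AddCircle
variable {T : ℝ} [hT : Fact (0 < T)]

theorem integral_fourier_of_ne_zero (μ : Measure (AddCircle T)) [μ.IsAddRightInvariant]
    {n : ℤ} (hn : n ≠ 0) : ∫ x, fourier n x ∂μ = 0 := by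
  have h := integral_add_right_eq_self (μ := μ) (fun x => fourier n x)
    ((T / 2 / n : ℝ) : AddCircle T)
  simp only [fourier_add_half_inv_index hn hT.out, integral_neg] at h
  exact CharZero.eq_neg_self_iff.mp h.symm

theorem integral_eq_of_integral_fourier_eq {μ ν : Measure (AddCircle T)} [IsFiniteMeasure μ]
    [IsFiniteMeasure ν] (h : ∀ n, ∫ x, fourier n x ∂μ = ∫ x, fourier n x ∂ν)
    (f : C(AddCircle T, ℂ)) : ∫ x, f x ∂μ = ∫ x, f x ∂ν := by
  let I (κ : Measure (AddCircle T)) [IsFiniteMeasure κ] : C(AddCircle T, ℂ) →L[ℂ] ℂ :=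
    (L1.integralCLM' ℂ).comp (ContinuousMap.toLp 1 κ ℂ)
  have hI (κ : Measure (AddCircle T)) [IsFiniteMeasure κ] (g : C(AddCircle T, ℂ)) :
      I κ g = ∫ x, g x ∂κ := by
    rw [← integral_congr_ae (ContinuousMap.coeFn_toLp (p := 1) (𝕜 := ℂ) κ g),
      ← L1.integral_eq_integral, L1.integral_eq' ℂ]
    rfl
  have hdense : Dense (Submodule.span ℂ (Set.range (@fourier T)) : Set C(AddCircle T, ℂ)) :=
    Submodule.dense_iff_topologicalClosure_eq_top.mpr span_fourier_closure_eq_top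
  have := ContinuousLinearMap.ext_on hdense (f := I μ) (g := I ν) (by
    rintro _ ⟨n, rfl⟩
    simp only [hI, h])
  rw [← hI, ← hI, this]

theorem ext_of_integral_fourier_eq {μ ν : Measure (AddCircle T)} [IsFiniteMeasure μ]
    [IsFiniteMeasure ν] (h : ∀ n, ∫ x, fourier n x ∂μ = ∫ x, fourier n x ∂ν) : μ = ν := by
  refine ext_of_forall_integral_eq_of_IsFiniteMeasure fun f => ?_
  have hf := integral_eq_of_integral_fourier_eq h
    ((ContinuousMap.mk ((↑) : ℝ → ℂ) Complex.continuous_ofReal).comp f.toContinuousMap)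
  simp only [ContinuousMap.comp_apply, ContinuousMap.coe_mk] at hf
  exact_mod_cast hf

end AddCircle

theorem Int.eq_zero_of_forall_eq_ite_dvd {α : Type*} [Zero α] {N : ℕ} (hN : 2 ≤ N) {c : ℤ → α}
    (hc : ∀ n, c n = if (N : ℤ) ∣ n then c (n / N) else 0) {n : ℤ} (hn : n ≠ 0) : c n = 0 := by
  induction h : n.natAbs using Nat.strong_induction_on generalizing n with
  | _ K ih =>
    rw [hc n]
    split_ifs with hdvd
    · obtain ⟨m, rfl⟩ := hdvd
      have hm : m ≠ 0 := right_ne_zero_of_mul hn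
      rw [Int.mul_ediv_cancel_left _ (by omega)]
      refine ih m.natAbs ?_ hm rfl
      rw [← h, Int.natAbs_mul, Int.natAbs_natCast]
      have := Int.natAbs_pos.mpr hm
      nlinarith
    · rfl

open AddCircle

theorem fourier_nsmul {T : ℝ} (n : ℤ) (k : ℕ) (x : AddCircle T) :
    fourier n (k • x) = fourier n x ^ k := by
  rw [fourier_apply, fourier_apply, smul_comm, toCircle_nsmul, Circle.coe_pow]

theorem fourier_apply_add {T : ℝ} (n : ℤ) (x y : AddCircle T) :
    fourier n (x + y) = fourier n x * fourier n y := by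
  rw [fourier_apply, fourier_apply, fourier_apply, zsmul_add, toCircle_add, Circle.coe_mul]

theorem fourier_natCast_mul {T : ℝ} (N : ℕ) (m : ℤ) (x : AddCircle T) :
    fourier (N * m) x = fourier m (N • x) := by
  rw [fourier_apply, fourier_apply, mul_zsmul, natCast_zsmul, smul_comm]

theorem fourier_inv_natCast_eq_one_iff {N : ℕ} (hN : N ≠ 0) (n : ℤ) :
    fourier n (((N : ℝ)⁻¹ : ℝ) : UnitAddCircle) = 1 ↔ (N : ℤ) ∣ n := by
  rw [fourier_apply, ← Circle.coe_one, Circle.coe_inj, ← toCircle_zero,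
    (injective_toCircle one_ne_zero).eq_iff, ← QuotientAddGroup.mk_zsmul, coe_eq_zero_iff]
  have hN' : (N : ℝ) ≠ 0 := by exact_mod_cast hN
  simp only [zsmul_eq_mul, mul_one]
  constructor
  · rintro ⟨m, hm⟩
    refine ⟨m, ?_⟩
    rw [eq_mul_inv_iff_mul_eq₀ hN'] at hm
    exact_mod_cast (by linarith : (n : ℝ) = N * m)
  · rintro ⟨m, rfl⟩
    exact ⟨m, by push_cast; field_simp⟩

theorem sum_fourier_nsmul_inv_natCast {N : ℕ} (hN : N ≠ 0) (n : ℤ) :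
    ∑ k ∈ Finset.range N, fourier n (k • (((N : ℝ)⁻¹ : ℝ) : UnitAddCircle)) =
      if (N : ℤ) ∣ n then (N : ℂ) else 0 := by
  simp_rw [fourier_nsmul]
  split_ifs with hdvd
  · simp [(fourier_inv_natCast_eq_one_iff hN n).mpr hdvd]
  · have hpow : fourier n (((N : ℝ)⁻¹ : ℝ) : UnitAddCircle) ^ N = 1 := by
      rw [← fourier_nsmul, ← QuotientAddGroup.mk_nsmul, nsmul_eq_mul, mul_inv_cancel₀ (by simpa),
        coe_period, fourier_eval_zero]
    rw [geom_sum_eq (mt (fourier_inv_natCast_eq_one_iff hN n).mp hdvd), hpow, sub_self, zero_div]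

theorem measurable_circleSection (N k : ℕ) : Measurable (circleSection N k) :=
  AddCircle.measurable_mk'.comp
    ((((measurableEquivIoc 1 0).measurable.subtype_val).add_const _).div_const _)

theorem circleSection_eq_add (N k : ℕ) (x : UnitAddCircle) :
    circleSection N k x = circleSection N 0 x + k • (((N : ℝ)⁻¹ : ℝ) : UnitAddCircle) := by
  rw [circleSection, circleSection, ← QuotientAddGroup.mk_nsmul, ← coe_add, nsmul_eq_mul]
  congr 1
  ring

theorem nsmul_circleSection_zero {N : ℕ} (hN : N ≠ 0) (x : UnitAddCircle) :
    N • circleSection N 0 x = x := by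
  rw [circleSection, ← QuotientAddGroup.mk_nsmul, nsmul_eq_mul, Nat.cast_zero, add_zero,
    mul_div_cancel₀ _ (by exact_mod_cast hN)]
  exact (equivIoc 1 0).symm_apply_apply x

theorem sum_fourier_circleSection {N : ℕ} (hN : N ≠ 0) (n : ℤ) (x : UnitAddCircle) :
    ∑ k ∈ Finset.range N, fourier n (circleSection N k x) =
      if (N : ℤ) ∣ n then N * fourier (n / N) x else 0 := by
  rw [Finset.sum_congr rfl fun k _ => by rw [circleSection_eq_add N k x, fourier_apply_add],
    ← Finset.mul_sum, sum_fourier_nsmul_inv_natCast hN]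
  split_ifs with hdvd
  · obtain ⟨m, rfl⟩ := hdvd
    rw [Int.mul_ediv_cancel_left _ (by exact_mod_cast hN), fourier_natCast_mul,
      nsmul_circleSection_zero hN, mul_comm]
  · rw [mul_zero]

theorem integral_fourier_circlePullback {N : ℕ} (hN : N ≠ 0) (μ : Measure UnitAddCircle)
    [IsFiniteMeasure μ] (n : ℤ) :
    ∫ x, fourier n x ∂(circlePullback N μ) =
      if (N : ℤ) ∣ n then ∫ x, fourier (n / N) x ∂μ else 0 := by
  have hint (κ : Measure UnitAddCircle) [IsFiniteMeasure κ] (m : ℤ) :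
      Integrable (fun x => fourier m x) κ :=
    (map_continuous _).integrable_of_hasCompactSupport (HasCompactSupport.of_compactSpace _)
  rw [circlePullback, integral_smul_measure, integral_finsetSum_measure fun k _ => hint _ n]
  simp_rw [integral_map (measurable_circleSection N _).aemeasurable
      (map_continuous (fourier n)).aestronglyMeasurable]
  have hint' (k : ℕ) : Integrable (fun x => fourier n (circleSection N k x)) μ :=
    (hint _ n).comp_measurable (measurable_circleSection N k)
  rw [← integral_finsetSum _ fun k _ => hint' k]
  simp_rw [sum_fourier_circleSection hN]
  split_ifs
  · rw [integral_const_mul, ENNReal.toReal_inv, ENNReal.toReal_natCast, Complex.real_smul,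
      Complex.ofReal_inv, Complex.ofReal_natCast, inv_mul_cancel_left₀ (by exact_mod_cast hN)]
  · simp

/-- If a finite positive measure `μ` on the circle satisfies `(φ_N)^*μ = μ` for some
`N ≥ 2`, then `μ = μ(𝕋)·λ` is a scalar multiple of the Haar probability measure. -/
theorem stmt_8 (N : ℕ) (hN : 2 ≤ N) (μ : Measure UnitAddCircle) [IsFiniteMeasure μ]
    (h : circlePullback N μ = μ) :
    μ = (μ Set.univ) • (volume : Measure UnitAddCircle) := by
  have hcoeff (n : ℤ) : ∫ x, fourier n x ∂μ =
      if (N : ℤ) ∣ n then ∫ x, fourier (n / N) x ∂μ else 0 := by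
    rw [← integral_fourier_circlePullback (by omega), h]
  have := (volume : Measure UnitAddCircle).smul_finite (measure_ne_top μ Set.univ)
  refine ext_of_integral_fourier_eq fun n => ?_
  rw [integral_smul_measure]
  rcases eq_or_ne n 0 with rfl | hn
  · simp [Measure.real]
  · rw [Int.eq_zero_of_forall_eq_ite_dvd hN hcoeff hn, integral_fourier_of_ne_zero _ hn, smul_zero]
end

section
/- Let N ≥ 2 and let α be a nowhere-zero holomorphic function on D with α(0) = 1 satisfying Π_{ζ^N=1} α(ζz) = 1 for all z ∈ D. Then f(z) = Π_{ν=0}^∞ α(z^{N^ν}) is a well-defined holomorphic function on D satisfying f(z^N)^N = Π_{ζ^N=1} f(ζz) for all z ∈ D. -/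
open Metric Filter Topology

/-!
Write `f z = ∏' ν, α (z ^ N ^ ν)`. Since `α` is holomorphic with `α 0 = 1`, on a disc of radius
`r < 1` we have `‖α w - 1‖ ≤ C ‖w‖`, so the `ν`-th factor differs from `1` by at most
`C r ^ N ^ ν ≤ C r ^ ν`; the product therefore converges uniformly on compact subsets of the
disc and `f` is holomorphic. Splitting off the first factor gives `f z = α z · f (z ^ N)`, and since
`(ζ z) ^ N = z ^ N` for every `N`-th root of unity `ζ`, the product of `f (ζ z)` over these roots
is `(∏ α (ζ z)) · f (z ^ N) ^ N = f (z ^ N) ^ N`.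
-/

theorem exists_norm_sub_le_mul_norm_sub_of_differentiableOn {E : Type*} [NormedAddCommGroup E]
    [NormedSpace ℂ E] [CompleteSpace E] {f : ℂ → E} {s K : Set ℂ} {c : ℂ} (hs : s ∈ 𝓝 c)
    (hf : DifferentiableOn ℂ f s) (hK : IsCompact K) (hKs : K ⊆ s) :
    ∃ C, 0 ≤ C ∧ ∀ w ∈ K, ‖f w - f c‖ ≤ C * ‖w - c‖ := by
  obtain ⟨C, hC⟩ := hK.exists_bound_of_continuousOn
    (((Complex.differentiableOn_dslope hs).mpr hf).continuousOn.mono hKs)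
  refine ⟨max C 0, le_max_right _ _, fun w hw => ?_⟩
  rw [← sub_smul_dslope, norm_smul, mul_comm]
  gcongr
  exact (hC w hw).trans (le_max_left _ _)

theorem norm_pow_le_pow_of_norm_le {R : Type*} [SeminormedRing R] [NormOneClass R] {z : R}
    {r : ℝ} (hz : ‖z‖ ≤ r) (hr : r ≤ 1) {m n : ℕ} (hnm : n ≤ m) : ‖z ^ m‖ ≤ r ^ n :=
  calc ‖z ^ m‖ ≤ ‖z‖ ^ m := norm_pow_le z m
    _ ≤ r ^ m := by gcongr
    _ ≤ r ^ n := pow_le_pow_of_le_one ((norm_nonneg z).trans hz) hr hnm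

section IteratedPowerProduct

variable {α : ℂ → ℂ} {N : ℕ}

theorem hasProdUniformlyOn_comp_pow_pow (hN : 2 ≤ N)
    (hα : DifferentiableOn ℂ α (ball 0 1)) (h0 : α 0 = 1) {r : ℝ} (hr0 : 0 ≤ r) (hr1 : r < 1) :
    HasProdUniformlyOn (fun n z => α (z ^ N ^ n)) (fun z => ∏' n, α (z ^ N ^ n))
      (closedBall 0 r) := by
  have hsub : closedBall (0 : ℂ) r ⊆ ball 0 1 := closedBall_subset_ball hr1
  obtain ⟨C, hC0, hC⟩ := exists_norm_sub_le_mul_norm_sub_of_differentiableOn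
    (ball_mem_nhds 0 one_pos) hα (isCompact_closedBall 0 r) hsub
  have hpow : ∀ n, ∀ z ∈ closedBall (0 : ℂ) r, ‖z ^ N ^ n‖ ≤ r ^ n := fun n z hz =>
    norm_pow_le_pow_of_norm_le (mem_closedBall_zero_iff.mp hz) hr1.le
      (Nat.lt_pow_self (by omega)).le
  have hmaps : ∀ n, Set.MapsTo (fun z : ℂ => z ^ N ^ n) (closedBall 0 r) (closedBall 0 r) :=
    fun n z hz => mem_closedBall_zero_iff.mpr <| by
      simpa using norm_pow_le_pow_of_norm_le (n := 1) (mem_closedBall_zero_iff.mp hz) hr1.le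
        (Nat.one_le_pow _ _ (by omega))
  have := Summable.hasProdUniformlyOn_nat_one_add (f := fun n z => α (z ^ N ^ n) - 1)
    (isCompact_closedBall 0 r) ((summable_geometric_of_lt_one hr0 hr1).mul_left C) ?_ ?_
  · simpa only [add_sub_cancel] using this
  · refine Eventually.of_forall fun n z hz => ?_
    calc ‖α (z ^ N ^ n) - 1‖ ≤ C * ‖z ^ N ^ n - 0‖ := by
          simpa only [h0] using hC _ (hmaps n hz)
      _ ≤ C * r ^ n := by rw [sub_zero]; gcongr; exact hpow n z hz
  · exact fun n => ((hα.continuousOn.mono hsub).comp (continuous_pow _).continuousOn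
      (hmaps n)).sub continuousOn_const

theorem hasProdLocallyUniformlyOn_comp_pow_pow (hN : 2 ≤ N)
    (hα : DifferentiableOn ℂ α (ball 0 1)) (h0 : α 0 = 1) :
    HasProdLocallyUniformlyOn (fun n z => α (z ^ N ^ n)) (fun z => ∏' n, α (z ^ N ^ n))
      (ball 0 1) := by
  refine hasProdLocallyUniformlyOn_of_of_forall_exists_nhds fun z hz => ?_
  have hz1 : ‖z‖ < 1 := mem_ball_zero_iff.mp hz
  refine ⟨closedBall 0 ((‖z‖ + 1) / 2), mem_nhdsWithin_of_mem_nhds ?_,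
    hasProdUniformlyOn_comp_pow_pow hN hα h0 (by positivity) (by linarith)⟩
  exact closedBall_mem_nhds_of_mem (mem_ball_zero_iff.mpr (by linarith))

theorem tprod_comp_pow_pow_eq_mul {w : ℂ} (hw : Multipliable fun n => α ((w ^ N) ^ N ^ n)) :
    ∏' n, α (w ^ N ^ n) = α w * ∏' n, α ((w ^ N) ^ N ^ n) := by
  have hshift : ∀ n, (w ^ N) ^ N ^ n = w ^ N ^ (n + 1) := fun n => by
    rw [← pow_mul, ← pow_succ']
  simp only [hshift] at hw ⊢
  simpa only [pow_zero, pow_one] using tprod_eq_zero_mul' (f := fun n => α (w ^ N ^ n)) hw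

end IteratedPowerProduct

theorem Polynomial.prod_map_nthRoots_one_mul_const {M : Type*} [CommMonoid M] {N : ℕ}
    (hN : 0 < N) (g : ℂ → M) (c : M) :
    ((nthRoots N (1 : ℂ)).map fun ζ => g ζ * c).prod =
      ((nthRoots N (1 : ℂ)).map g).prod * c ^ N := by
  rw [Multiset.prod_map_mul, Multiset.map_const', Multiset.prod_replicate,
    (Complex.isPrimitiveRoot_exp N hN.ne').card_nthRoots_one]

theorem stmt_13_general (N : ℕ) (hN : 2 ≤ N) (α : ℂ → ℂ)
    (hα : DifferentiableOn ℂ α (Metric.ball 0 1)) (h0 : α 0 = 1)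
    (hrel : ∀ z ∈ Metric.ball (0 : ℂ) 1,
      ((Polynomial.nthRoots N (1 : ℂ)).map fun ζ => α (ζ * z)).prod = 1) :
    (∀ z ∈ Metric.ball (0 : ℂ) 1, Multipliable fun ν : ℕ => α (z ^ N ^ ν)) ∧
    DifferentiableOn ℂ (fun z => ∏' ν : ℕ, α (z ^ N ^ ν)) (Metric.ball 0 1) ∧
    ∀ z ∈ Metric.ball (0 : ℂ) 1,
      (∏' ν : ℕ, α ((z ^ N) ^ N ^ ν)) ^ N =
        ((Polynomial.nthRoots N (1 : ℂ)).map fun ζ => ∏' ν : ℕ, α ((ζ * z) ^ N ^ ν)).prod := by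
  have hprod := hasProdLocallyUniformlyOn_comp_pow_pow hN hα h0
  have hmult : ∀ z ∈ ball (0 : ℂ) 1, Multipliable fun ν => α (z ^ N ^ ν) :=
    fun z hz => (hprod.hasProd hz).multipliable
  refine ⟨hmult, ?_, fun z hz => ?_⟩
  · refine hprod.tendstoLocallyUniformlyOn_finsetRange.differentiableOn
      (Eventually.of_forall fun n => ?_) isOpen_ball
    exact DifferentiableOn.fun_finsetProd fun ν _ =>
      hα.comp (differentiable_pow _).differentiableOn fun w hw => by
        simpa using pow_lt_one₀ (norm_nonneg w) (mem_ball_zero_iff.mp hw) (by positivity)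
  · have hzN : z ^ N ∈ ball (0 : ℂ) 1 := by
      simpa using pow_lt_one₀ (norm_nonneg z) (mem_ball_zero_iff.mp hz) (by omega : N ≠ 0)
    have hroot : ∀ ζ ∈ Polynomial.nthRoots N (1 : ℂ), (ζ * z) ^ N = z ^ N := fun ζ hζ => by
      rw [mul_pow, (Polynomial.mem_nthRoots (by omega)).mp hζ, one_mul]
    rw [Multiset.map_congr rfl fun ζ hζ => by
        rw [tprod_comp_pow_pow_eq_mul (hroot ζ hζ ▸ hmult _ hzN), hroot ζ hζ],
      Polynomial.prod_map_nthRoots_one_mul_const (by omega), hrel z hz, one_mul]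

/-- Let `N ≥ 2` and let `α` be a nowhere-zero holomorphic function on the unit disc with
`α(0) = 1` satisfying `Π_{ζ^N=1} α(ζz) = 1` on the disc. Then
`f(z) = Π_{ν=0}^∞ α(z^{N^ν})` is a well-defined holomorphic function on the disc
satisfying `f(z^N)^N = Π_{ζ^N=1} f(ζz)`. -/
theorem stmt_13 (N : ℕ) (hN : 2 ≤ N) (α : ℂ → ℂ)
    (hα : DifferentiableOn ℂ α (Metric.ball 0 1)) (h0 : α 0 = 1)
    (hz : ∀ z ∈ Metric.ball (0 : ℂ) 1, α z ≠ 0)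
    (hrel : ∀ z ∈ Metric.ball (0 : ℂ) 1,
      ((Polynomial.nthRoots N (1 : ℂ)).map fun ζ => α (ζ * z)).prod = 1) :
    (∀ z ∈ Metric.ball (0 : ℂ) 1, Multipliable fun ν : ℕ => α (z ^ N ^ ν)) ∧
    DifferentiableOn ℂ (fun z => ∏' ν : ℕ, α (z ^ N ^ ν)) (Metric.ball 0 1) ∧
    ∀ z ∈ Metric.ball (0 : ℂ) 1,
      (∏' ν : ℕ, α ((z ^ N) ^ N ^ ν)) ^ N =
        ((Polynomial.nthRoots N (1 : ℂ)).map fun ζ => ∏' ν : ℕ, α ((ζ * z) ^ N ^ ν)).prod :=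
  stmt_13_general N hN α hα h0 hrel
end

section
/- For real parameters 0 ≤ δ < γ, define κ_γ(x) = Γ(γ+1)^{−1}·∫₀^x |log t|^γ dt on [0,1]. Then κ_δ(x) ≤ κ_γ(x) for all x ∈ [0,1], with strict inequality for 0 < x < 1. -/
open MeasureTheory Set Real

/-- Substitution `t = exp(-y)`. -/
lemma integral_abs_log_rpow (γ : ℝ) {x : ℝ} (hx : 0 < x) (hx1 : x ≤ 1) :
    ∫ t in (0 : ℝ)..x, |Real.log t| ^ γ
      = ∫ y in Set.Ioi (-Real.log x), Real.exp (-y) * y ^ γ := by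
  have hL : 0 ≤ -Real.log x := by
    have := Real.log_nonpos hx.le hx1; linarith
  have himg : (fun y => Real.exp (-y)) '' Set.Ioi (-Real.log x) = Set.Ioo 0 x := by
    ext t
    simp only [Set.mem_image, Set.mem_Ioi, Set.mem_Ioo]
    constructor
    · rintro ⟨y, hy, rfl⟩
      refine ⟨Real.exp_pos _, ?_⟩
      rw [← Real.exp_log hx]
      exact Real.exp_lt_exp.mpr (by linarith)
    · rintro ⟨ht0, htx⟩
      refine ⟨-Real.log t, ?_, by rw [neg_neg, Real.exp_log ht0]⟩
      have := Real.log_lt_log ht0 htx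
      linarith
  have hderiv : ∀ y ∈ Set.Ioi (-Real.log x),
      HasDerivWithinAt (fun y => Real.exp (-y)) (-Real.exp (-y)) (Set.Ioi (-Real.log x)) y := by
    intro y _
    have h1 : HasDerivAt (fun y : ℝ => Real.exp (-y)) (Real.exp (-y) * (-1)) y :=
      (Real.hasDerivAt_exp (-y)).comp y ((hasDerivAt_id y).neg)
    simpa [mul_comm] using h1.hasDerivWithinAt
  have hinj : Set.InjOn (fun y => Real.exp (-y)) (Set.Ioi (-Real.log x)) := by
    intro a _ b _ h
    have := Real.exp_injective h
    linarith
  rw [intervalIntegral.integral_of_le hx.le, integral_Ioc_eq_integral_Ioo, ← himg,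
    integral_image_eq_integral_abs_deriv_smul measurableSet_Ioi hderiv hinj]
  refine setIntegral_congr_fun measurableSet_Ioi fun y hy => ?_
  have hy0 : 0 ≤ y := le_trans hL (le_of_lt hy)
  rw [smul_eq_mul, abs_neg, abs_of_pos (Real.exp_pos _), Real.log_exp, abs_neg,
    abs_of_nonneg hy0]

lemma gammaInt_integrableOn {γ L : ℝ} (hγ : 0 ≤ γ) (hL : 0 ≤ L) :
    IntegrableOn (fun y => Real.exp (-y) * y ^ γ) (Set.Ioi L) := by
  have h := Real.GammaIntegral_convergent (show (0:ℝ) < γ + 1 by linarith)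
  have h2 : IntegrableOn (fun y => Real.exp (-y) * y ^ (γ + 1 - 1)) (Set.Ioi L) :=
    h.mono_set (Set.Ioi_subset_Ioi hL)
  simpa using h2

lemma gammaInt_integrableOn_Ioc {γ L : ℝ} (hγ : 0 ≤ γ) :
    IntegrableOn (fun y => Real.exp (-y) * y ^ γ) (Set.Ioc 0 L) := by
  have h := Real.GammaIntegral_convergent (show (0:ℝ) < γ + 1 by linarith)
  have h2 : IntegrableOn (fun y => Real.exp (-y) * y ^ (γ + 1 - 1)) (Set.Ioc 0 L) :=
    h.mono_set Set.Ioc_subset_Ioi_self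
  simpa using h2

lemma tail_lt {δ γ L : ℝ} (hδ : 0 ≤ δ) (hδγ : δ < γ) (hL : 0 < L) :
    L ^ (γ - δ) * ∫ y in Set.Ioi L, Real.exp (-y) * y ^ δ
      < ∫ y in Set.Ioi L, Real.exp (-y) * y ^ γ := by
  have hγ : (0:ℝ) ≤ γ := le_trans hδ hδγ.le
  have hIγ := gammaInt_integrableOn hγ hL.le
  have hIδ : IntegrableOn (fun y => L ^ (γ - δ) * (Real.exp (-y) * y ^ δ)) (Set.Ioi L) :=
    (gammaInt_integrableOn hδ hL.le).const_mul (L ^ (γ - δ))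
  have hsubInt : IntegrableOn (fun y =>
      Real.exp (-y) * y ^ γ - L ^ (γ - δ) * (Real.exp (-y) * y ^ δ)) (Set.Ioi L) :=
    hIγ.sub hIδ
  have hdiff : 0 < ∫ y in Set.Ioi L,
      (Real.exp (-y) * y ^ γ - L ^ (γ - δ) * (Real.exp (-y) * y ^ δ)) := by
    rw [setIntegral_pos_iff_support_of_nonneg_ae ?_ hsubInt]
    · have key : ∀ y ∈ Set.Ioi L,
          0 < Real.exp (-y) * y ^ γ - L ^ (γ - δ) * (Real.exp (-y) * y ^ δ) := by
        intro y hy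
        have hy0 : 0 < y := lt_trans hL hy
        have h1 : y ^ γ = y ^ δ * y ^ (γ - δ) := by
          rw [← Real.rpow_add hy0]; ring_nf
        have h2 : L ^ (γ - δ) < y ^ (γ - δ) :=
          Real.rpow_lt_rpow hL.le hy (by linarith)
        have h3 : 0 < y ^ δ := Real.rpow_pos_of_pos hy0 δ
        have h4 : 0 < Real.exp (-y) := Real.exp_pos _
        nlinarith [mul_pos (mul_pos h4 h3) (sub_pos.mpr h2)]
      have hsub : Set.Ioi L ⊆ Function.support (fun y =>
          Real.exp (-y) * y ^ γ - L ^ (γ - δ) * (Real.exp (-y) * y ^ δ)) ∩ Set.Ioi L :=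
        fun y hy => ⟨ne_of_gt (key y hy), hy⟩
      calc (0:ENNReal) < volume (Set.Ioi L) := by simp [Real.volume_Ioi]
        _ ≤ _ := measure_mono hsub
    · filter_upwards [ae_restrict_mem measurableSet_Ioi] with y hy
      simp only [Pi.zero_apply]
      have hy0 : 0 < y := lt_trans hL hy
      have h1 : y ^ γ = y ^ δ * y ^ (γ - δ) := by
        rw [← Real.rpow_add hy0]; ring_nf
      have h2 : L ^ (γ - δ) < y ^ (γ - δ) := Real.rpow_lt_rpow hL.le hy (by linarith)
      have h3 : 0 < y ^ δ := Real.rpow_pos_of_pos hy0 δ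
      have h4 : 0 < Real.exp (-y) := Real.exp_pos _
      nlinarith [mul_pos (mul_pos h4 h3) (sub_pos.mpr h2)]
  rw [integral_sub hIγ hIδ, integral_const_mul] at hdiff
  linarith

lemma head_lt {δ γ L : ℝ} (hδ : 0 ≤ δ) (hδγ : δ < γ) (hL : 0 < L) :
    (∫ y in Set.Ioc 0 L, Real.exp (-y) * y ^ γ)
      < L ^ (γ - δ) * ∫ y in Set.Ioc 0 L, Real.exp (-y) * y ^ δ := by
  have hγ : (0:ℝ) ≤ γ := le_trans hδ hδγ.le
  have hIγ := gammaInt_integrableOn_Ioc (γ := γ) (L := L) hγ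
  have hIδ : IntegrableOn (fun y => L ^ (γ - δ) * (Real.exp (-y) * y ^ δ)) (Set.Ioc 0 L) :=
    (gammaInt_integrableOn_Ioc (γ := δ) (L := L) hδ).const_mul (L ^ (γ - δ))
  have hsubInt2 : IntegrableOn (fun y =>
      L ^ (γ - δ) * (Real.exp (-y) * y ^ δ) - Real.exp (-y) * y ^ γ) (Set.Ioc 0 L) :=
    hIδ.sub hIγ
  have hdiff : 0 < ∫ y in Set.Ioc 0 L,
      (L ^ (γ - δ) * (Real.exp (-y) * y ^ δ) - Real.exp (-y) * y ^ γ) := by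
    rw [setIntegral_pos_iff_support_of_nonneg_ae ?_ hsubInt2]
    · have key : ∀ y ∈ Set.Ioo (0:ℝ) L,
          0 < L ^ (γ - δ) * (Real.exp (-y) * y ^ δ) - Real.exp (-y) * y ^ γ := by
        intro y hy
        have h1 : y ^ γ = y ^ δ * y ^ (γ - δ) := by
          rw [← Real.rpow_add hy.1]; ring_nf
        have h2 : y ^ (γ - δ) < L ^ (γ - δ) :=
          Real.rpow_lt_rpow hy.1.le hy.2 (by linarith)
        have h3 : 0 < y ^ δ := Real.rpow_pos_of_pos hy.1 δ
        have h4 : 0 < Real.exp (-y) := Real.exp_pos _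
        nlinarith [mul_pos (mul_pos h4 h3) (sub_pos.mpr h2)]
      have hsub : Set.Ioo 0 L ⊆ Function.support (fun y =>
          L ^ (γ - δ) * (Real.exp (-y) * y ^ δ) - Real.exp (-y) * y ^ γ) ∩ Set.Ioc 0 L :=
        fun y hy => ⟨ne_of_gt (key y hy), Set.Ioo_subset_Ioc_self hy⟩
      calc (0:ENNReal) < volume (Set.Ioo 0 L) := by simp [Real.volume_Ioo, hL]
        _ ≤ _ := measure_mono hsub
    · filter_upwards [ae_restrict_mem measurableSet_Ioc] with y hy
      simp only [Pi.zero_apply]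
      have h1 : y ^ γ = y ^ δ * y ^ (γ - δ) := by
        rw [← Real.rpow_add hy.1]; ring_nf
      have h2 : y ^ (γ - δ) ≤ L ^ (γ - δ) :=
        Real.rpow_le_rpow hy.1.le hy.2 (by linarith)
      have h3 : 0 < y ^ δ := Real.rpow_pos_of_pos hy.1 δ
      have h4 : 0 < Real.exp (-y) := Real.exp_pos _
      nlinarith [mul_nonneg (mul_nonneg h4.le h3.le) (sub_nonneg.mpr h2)]
  rw [integral_sub hIδ hIγ, integral_const_mul] at hdiff
  linarith

lemma gamma_split {γ L : ℝ} (hγ : 0 ≤ γ) (hL : 0 ≤ L) :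
    Real.Gamma (γ + 1) = (∫ y in Set.Ioc 0 L, Real.exp (-y) * y ^ γ)
      + ∫ y in Set.Ioi L, Real.exp (-y) * y ^ γ := by
  rw [Real.Gamma_eq_integral (show (0:ℝ) < γ + 1 by linarith)]
  simp only [add_sub_cancel_right]
  rw [← Set.Ioc_union_Ioi_eq_Ioi hL,
    setIntegral_union (Set.Ioc_disjoint_Ioi le_rfl) measurableSet_Ioi
      (gammaInt_integrableOn_Ioc hγ) (gammaInt_integrableOn hγ hL)]

lemma gamma_eq_tail (γ : ℝ) (hγ : 0 ≤ γ) :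
    Real.Gamma (γ + 1) = ∫ y in Set.Ioi (0:ℝ), Real.exp (-y) * y ^ γ := by
  rw [Real.Gamma_eq_integral (show (0:ℝ) < γ + 1 by linarith)]
  simp

lemma tail_pos {γ L : ℝ} (hγ : 0 ≤ γ) (hL : 0 ≤ L) :
    0 < ∫ y in Set.Ioi L, Real.exp (-y) * y ^ γ := by
  rw [setIntegral_pos_iff_support_of_nonneg_ae ?_ (gammaInt_integrableOn hγ hL)]
  · have hsub : Set.Ioi L ⊆ Function.support (fun y => Real.exp (-y) * y ^ γ) ∩ Set.Ioi L := by
      intro y hy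
      have hy0 : 0 < y := lt_of_le_of_lt hL hy
      exact ⟨ne_of_gt (mul_pos (Real.exp_pos _) (Real.rpow_pos_of_pos hy0 _)), hy⟩
    calc (0:ENNReal) < volume (Set.Ioi L) := by simp [Real.volume_Ioi]
      _ ≤ _ := measure_mono hsub
  · filter_upwards [ae_restrict_mem measurableSet_Ioi] with y hy
    simp only [Pi.zero_apply]
    have hy0 : 0 < y := lt_of_le_of_lt hL hy
    positivity

lemma head_pos {γ L : ℝ} (hγ : 0 ≤ γ) (hL : 0 < L) :
    0 < ∫ y in Set.Ioc 0 L, Real.exp (-y) * y ^ γ := by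
  rw [setIntegral_pos_iff_support_of_nonneg_ae ?_ (gammaInt_integrableOn_Ioc hγ)]
  · have hsub : Set.Ioc 0 L ⊆ Function.support (fun y => Real.exp (-y) * y ^ γ) ∩ Set.Ioc 0 L := by
      intro y hy
      exact ⟨ne_of_gt (mul_pos (Real.exp_pos _) (Real.rpow_pos_of_pos hy.1 _)), hy⟩
    calc (0:ENNReal) < volume (Set.Ioc 0 L) := by simp [Real.volume_Ioc, hL]
      _ ≤ _ := measure_mono hsub
  · filter_upwards [ae_restrict_mem measurableSet_Ioc] with y hy
    simp only [Pi.zero_apply]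
    have hy0 : 0 < y := hy.1
    positivity

lemma key_frac {δ γ L : ℝ} (hδ : 0 ≤ δ) (hδγ : δ < γ) (hL : 0 < L) :
    (Real.Gamma (δ + 1))⁻¹ * ∫ y in Set.Ioi L, Real.exp (-y) * y ^ δ
      < (Real.Gamma (γ + 1))⁻¹ * ∫ y in Set.Ioi L, Real.exp (-y) * y ^ γ := by
  have hγ : (0:ℝ) ≤ γ := hδ.trans hδγ.le
  have hA := tail_lt hδ hδγ hL
  have hB := head_lt hδ hδγ hL
  have ha := tail_pos hδ hL.le
  have hApos := tail_pos hγ hL.le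
  have hb := head_pos hδ hL
  have hBpos := head_pos hγ hL
  have hc : 0 < L ^ (γ - δ) := Real.rpow_pos_of_pos hL _
  rw [gamma_split hγ hL.le, gamma_split hδ hL.le, inv_mul_eq_div, inv_mul_eq_div,
    div_lt_div_iff₀ (by linarith) (by linarith)]
  nlinarith [mul_lt_mul_of_pos_right hA hb, mul_lt_mul_of_pos_left hB ha]

/-- The generalized entropy function `κ_γ(x) = Γ(γ+1)^{−1}·∫₀^x |log t|^γ dt`. -/
noncomputable def kappaGen (γ : ℝ) (x : ℝ) : ℝ :=
  (Real.Gamma (γ + 1))⁻¹ * ∫ t in (0 : ℝ)..x, |Real.log t| ^ γ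

lemma kappaGen_zero (γ : ℝ) : kappaGen γ 0 = 0 := by
  simp [kappaGen, intervalIntegral.integral_same]

lemma kappaGen_one {γ : ℝ} (hγ : 0 ≤ γ) : kappaGen γ 1 = 1 := by
  rw [kappaGen, integral_abs_log_rpow γ one_pos le_rfl, Real.log_one, neg_zero,
    ← gamma_eq_tail γ hγ]
  exact inv_mul_cancel₀ (Real.Gamma_pos_of_pos (by linarith)).ne'

lemma kappaGen_lt {δ γ : ℝ} (hδ : 0 ≤ δ) (hδγ : δ < γ) {x : ℝ} (hx : 0 < x) (hx1 : x < 1) :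
    kappaGen δ x < kappaGen γ x := by
  have hL : 0 < -Real.log x := by
    have := Real.log_neg hx hx1; linarith
  rw [kappaGen, kappaGen, integral_abs_log_rpow γ hx hx1.le,
    integral_abs_log_rpow δ hx hx1.le]
  exact key_frac hδ hδγ hL

/-- For `0 ≤ δ < γ` one has `κ_δ(x) ≤ κ_γ(x)` on `[0,1]`, with strict inequality
for `0 < x < 1`. -/
theorem stmt_15 (δ γ : ℝ) (hδ : 0 ≤ δ) (hδγ : δ < γ) :
    (∀ x ∈ Set.Icc (0 : ℝ) 1, kappaGen δ x ≤ kappaGen γ x) ∧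
    (∀ x ∈ Set.Ioo (0 : ℝ) 1, kappaGen δ x < kappaGen γ x) := by
  constructor
  · intro x hx
    rcases eq_or_lt_of_le hx.1 with h0 | h0
    · rw [← h0, kappaGen_zero, kappaGen_zero]
    rcases eq_or_lt_of_le hx.2 with h1 | h1
    · rw [h1, kappaGen_one hδ, kappaGen_one (hδ.trans hδγ.le)]
    · exact (kappaGen_lt hδ hδγ h0 h1).le
  · intro x hx
    exact kappaGen_lt hδ hδγ hx.1 hx.2
end

section
/- Let 𝒮 be the multiplicative monoid generated by pairwise coprime integers N₁,…,N_s ≥ 2, and let a ≥ 0. Then there are constants a₂, a₃ ≥ 0 such that for all z in the open unit disc, Σ_{N ∈ 𝒮} log(1 + a|z|^N) ≤ a₂ + a₃·|log|log|z|||^s. In particular, for 1/2 ≤ |z| < 1 one has Σ_{N ∈ 𝒮} log(1 + a|z|^N) ≤ a₄·|log(1 − |z|)|^s for some constant a₄. -/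
/-!
Write `r = ‖z‖`, `λ = -log r` and `N = ∏ i, N_i ^ ν_i`. Since every factor is at least `1`,
`N ≥ max_i N_i ^ ν_i ≥ (1/s) ∑_i 2 ^ ν_i`, so `log (1 + a r ^ N) ≤ a r ^ N ≤ a ∏_i exp (-μ 2 ^ ν_i)`
with `μ = λ / s`. The sum over all exponent tuples therefore factorises and is at most
`a (∑_n exp (-μ 2 ^ n)) ^ s`. In this lacunary series the first `⌈log₂ (1/μ)⌉` terms are at most `1`
and the remaining ones are dominated by `2⁻¹, 2⁻², …`, so it is at most `|log₂ μ| + 2`, which is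
`|log λ| / log 2` up to an additive constant. For `1/2 ≤ r < 1` one has `1 - r ≤ λ ≤ log 2 < 1`,
hence `|log λ| ≤ |log (1 - r)|` and `log 2 ≤ |log (1 - r)|`.
-/

open Real Finset

lemma hasSum_pi_prod {ι : Type*} {g : ι → ℝ} {b : ℝ} (hg0 : 0 ≤ g) (hg : HasSum g b)
    (s : ℕ) : HasSum (fun ν : Fin s → ι => ∏ i, g (ν i)) (b ^ s) := by
  induction s with
  | zero => simp
  | succ s ih =>
    have hprod : 0 ≤ fun ν : Fin s → ι => ∏ i, g (ν i) := fun _ => prod_nonneg fun _ _ => hg0 _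
    have hsum := Summable.mul_of_nonneg hg.summable ih.summable hg0 hprod
    have hmul := hg.mul ih hsum
    rw [pow_succ', ← (Fin.consEquiv fun _ => ι).hasSum_iff]
    convert hmul using 2 with p
    · rfl -- two paths to the `AddCommMonoid ℝ` instance
    · exact Fin.prod_univ_succ (M := ℝ) _

lemma sum_le_card_mul_prod {ι : Type*} (t : Finset ι) {x : ι → ℕ} (hx : ∀ i ∈ t, 1 ≤ x i) :
    ∑ i ∈ t, x i ≤ #t * ∏ i ∈ t, x i := by
  simpa using sum_le_card_nsmul t x _ fun i hi => single_le_prod' hx hi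

lemma one_le_mul_two_pow_ceil_neg_logb {μ : ℝ} (hμ : 0 < μ) :
    1 ≤ μ * 2 ^ ⌈-logb 2 μ⌉₊ := calc
  1 = μ * 2 ^ (-logb 2 μ) := by rw [rpow_neg zero_le_two, rpow_logb zero_lt_two (by norm_num) hμ,
      mul_inv_cancel₀ hμ.ne']
  _ ≤ μ * 2 ^ ⌈-logb 2 μ⌉₊ := by
      rw [← rpow_natCast]
      gcongr
      · norm_num
      · exact Nat.le_ceil _

lemma exp_neg_mul_two_pow_add_le {μ : ℝ} {n₀ : ℕ} (h : 1 ≤ μ * 2 ^ n₀) (j : ℕ) :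
    exp (-(μ * 2 ^ (j + n₀))) ≤ 2⁻¹ ^ (j + 1) := calc
  exp (-(μ * 2 ^ (j + n₀))) ≤ exp (-(j + 1)) := by
      have hj : (j : ℝ) + 1 ≤ 2 ^ j := by exact_mod_cast Nat.lt_two_pow_self
      gcongr
      rw [pow_add, ← mul_assoc, mul_comm μ, mul_assoc]
      nlinarith [pow_pos (zero_lt_two (α := ℝ)) j]
  _ = exp (-1) ^ (j + 1) := by rw [← exp_nat_mul]; push_cast; ring_nf
  _ ≤ 2⁻¹ ^ (j + 1) := by
      gcongr
      linarith [exp_neg_one_lt_half]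

lemma summable_two_inv_pow_succ : Summable fun j : ℕ => (2 : ℝ)⁻¹ ^ (j + 1) :=
  (summable_nat_add_iff 1).2 (summable_geometric_of_lt_one (by norm_num) (by norm_num))

lemma summable_exp_neg_mul_two_pow {μ : ℝ} (hμ : 0 < μ) :
    Summable fun n : ℕ => exp (-(μ * 2 ^ n)) :=
  (summable_nat_add_iff _).1 <| summable_two_inv_pow_succ.of_nonneg_of_le (fun _ => (exp_pos _).le)
    (exp_neg_mul_two_pow_add_le (one_le_mul_two_pow_ceil_neg_logb hμ))

lemma tsum_exp_neg_mul_two_pow_le {μ : ℝ} (hμ : 0 < μ) :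
    ∑' n : ℕ, exp (-(μ * 2 ^ n)) ≤ |logb 2 μ| + 2 := by
  set n₀ := ⌈-logb 2 μ⌉₊
  have hhead : ∑ n ∈ range n₀, exp (-(μ * 2 ^ n)) ≤ |logb 2 μ| + 1 := calc
    ∑ n ∈ range n₀, exp (-(μ * 2 ^ n)) ≤ ∑ n ∈ range n₀, 1 :=
        sum_le_sum fun n _ => exp_le_one_iff.2 (by simp only [neg_nonpos]; positivity)
    _ = n₀ := by simp
    _ ≤ ⌈|logb 2 μ|⌉₊ := by exact_mod_cast Nat.ceil_mono (neg_le_abs (logb 2 μ))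
    _ ≤ |logb 2 μ| + 1 := (Nat.ceil_lt_add_one (abs_nonneg _)).le
  have htail : ∑' j : ℕ, exp (-(μ * 2 ^ (j + n₀))) ≤ 1 := calc
    ∑' j : ℕ, exp (-(μ * 2 ^ (j + n₀))) ≤ ∑' j : ℕ, (2 : ℝ)⁻¹ ^ (j + 1) :=
        ((summable_nat_add_iff n₀).2 (summable_exp_neg_mul_two_pow hμ)).tsum_le_tsum
          (exp_neg_mul_two_pow_add_le (one_le_mul_two_pow_ceil_neg_logb hμ))
          summable_two_inv_pow_succ
    _ = 1 := by simp only [pow_succ, tsum_mul_right, tsum_geometric_inv_two]; norm_num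
  rw [← (summable_exp_neg_mul_two_pow hμ).sum_add_tsum_nat_add n₀]
  linarith

lemma pow_prod_pow_le_prod_exp {s : ℕ} (hs : 0 < s) {N : Fin s → ℕ} (hN : ∀ i, 2 ≤ N i)
    {r : ℝ} (hr0 : 0 < r) (hr1 : r ≤ 1) (ν : Fin s → ℕ) :
    r ^ (∏ i, N i ^ ν i) ≤ ∏ i, exp (-(|log r| / s * 2 ^ ν i)) := by
  have hsum : ∑ i, 2 ^ ν i ≤ s * ∏ i, N i ^ ν i := calc
    ∑ i, 2 ^ ν i ≤ ∑ i, N i ^ ν i := sum_le_sum fun i _ => Nat.pow_le_pow_left (hN i) _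
    _ ≤ s * ∏ i, N i ^ ν i := by
      simpa using sum_le_card_mul_prod univ fun i _ => Nat.one_le_pow _ (N i) (by linarith [hN i])
  rw [abs_of_nonpos (log_nonpos hr0.le hr1)]
  calc r ^ (∏ i, N i ^ ν i) = exp (-(-log r / s * ((s * ∏ i, N i ^ ν i : ℕ) : ℝ))) := by
        rw [← exp_log hr0, ← exp_nat_mul, exp_log hr0]
        congr 1
        push_cast
        field_simp
    _ ≤ exp (-(-log r / s * ((∑ i, 2 ^ ν i : ℕ) : ℝ))) := by
        gcongr
        · exact div_nonneg (neg_nonneg.2 (log_nonpos hr0.le hr1)) s.cast_nonneg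
    _ = ∏ i, exp (-(-log r / s * 2 ^ ν i)) := by
        rw [← exp_sum]
        push_cast
        rw [mul_sum, sum_neg_distrib]

lemma tsum_log_one_add_mul_pow_prod_le {s : ℕ} (hs : 0 < s) {N : Fin s → ℕ}
    (hN : ∀ i, 2 ≤ N i) {a : ℝ} (ha : 0 ≤ a) {r : ℝ} (hr0 : 0 < r) (hr1 : r < 1) :
    ∑' ν : Fin s → ℕ, log (1 + a * r ^ ∏ i, N i ^ ν i) ≤
      a * (|logb 2 (|log r| / s)| + 2) ^ s := by
  set μ := |log r| / s
  have hμ : 0 < μ := div_pos (abs_pos.2 (log_neg hr0 hr1).ne) (Nat.cast_pos.2 hs)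
  set g : ℕ → ℝ := fun n => exp (-(μ * 2 ^ n))
  have hprod : HasSum (fun ν : Fin s → ℕ => a * ∏ i, g (ν i)) (a * (∑' n, g n) ^ s) :=
    (hasSum_pi_prod (fun _ => (exp_pos _).le) (summable_exp_neg_mul_two_pow hμ).hasSum s).mul_left a
  have hterm_nonneg (ν : Fin s → ℕ) : 0 ≤ log (1 + a * r ^ ∏ i, N i ^ ν i) :=
    log_nonneg (by simp only [le_add_iff_nonneg_right]; positivity)
  have hterm_le (ν : Fin s → ℕ) : log (1 + a * r ^ ∏ i, N i ^ ν i) ≤ a * ∏ i, g (ν i) := calc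
    log (1 + a * r ^ ∏ i, N i ^ ν i) ≤ a * r ^ ∏ i, N i ^ ν i := by
        linarith [log_le_sub_one_of_pos (by positivity : 0 < 1 + a * r ^ ∏ i, N i ^ ν i)]
    _ ≤ a * ∏ i, g (ν i) := by gcongr; exact pow_prod_pow_le_prod_exp hs hN hr0 hr1.le ν
  calc ∑' ν : Fin s → ℕ, log (1 + a * r ^ ∏ i, N i ^ ν i) ≤ a * (∑' n, g n) ^ s :=
        hasSum_le hterm_le (hprod.summable.of_nonneg_of_le hterm_nonneg hterm_le).hasSum hprod
    _ ≤ a * (|logb 2 μ| + 2) ^ s := by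
        gcongr
        exact tsum_exp_neg_mul_two_pow_le hμ

lemma abs_logb_div_le {x : ℝ} (hx : 0 < x) {s : ℕ} (hs : 0 < s) :
    |logb 2 (x / s)| ≤ |log x| / log 2 + logb 2 s := by
  have hs' : (1 : ℝ) ≤ s := Nat.one_le_cast.2 hs
  have hx' : |logb 2 x| = |log x| / log 2 := by rw [logb, abs_div, abs_of_pos (log_pos one_lt_two)]
  calc |logb 2 (x / s)| = |logb 2 x - logb 2 s| := by rw [logb_div hx.ne' (by positivity)]
    _ ≤ |logb 2 x| + |logb 2 s| := abs_sub _ _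
    _ = |log x| / log 2 + logb 2 s := by rw [hx', abs_of_nonneg (logb_nonneg one_lt_two hs')]

lemma exists_tsum_log_one_add_mul_pow_prod_le {s : ℕ} (hs : 0 < s) {N : Fin s → ℕ}
    (hN : ∀ i, 2 ≤ N i) {a : ℝ} (ha : 0 ≤ a) :
    ∃ a₂ a₃ : ℝ, 0 ≤ a₂ ∧ 0 ≤ a₃ ∧ ∀ r : ℝ, 0 ≤ r → r < 1 →
      ∑' ν : Fin s → ℕ, log (1 + a * r ^ ∏ i, N i ^ ν i) ≤ a₂ + a₃ * |log (|log r|)| ^ s := by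
  have hc : 0 ≤ logb 2 s + 2 := by
    have := logb_nonneg one_lt_two (Nat.one_le_cast.2 hs); linarith
  refine ⟨a * 2 ^ (s - 1) * (logb 2 s + 2) ^ s, a * 2 ^ (s - 1) / log 2 ^ s,
    by positivity, by positivity, fun r hr0 hr1 => ?_⟩
  rcases hr0.eq_or_lt with rfl | hr0
  · have hM (ν : Fin s → ℕ) : ∏ i, N i ^ ν i ≠ 0 :=
      prod_ne_zero_iff.2 fun i _ => pow_ne_zero _ (by linarith [hN i])
    simp only [zero_pow (hM _), mul_zero, add_zero, log_one, tsum_zero]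
    positivity
  calc ∑' ν : Fin s → ℕ, log (1 + a * r ^ ∏ i, N i ^ ν i)
      ≤ a * (|logb 2 (|log r| / s)| + 2) ^ s := tsum_log_one_add_mul_pow_prod_le hs hN ha hr0 hr1
    _ ≤ a * (|log (|log r|)| / log 2 + (logb 2 s + 2)) ^ s := by
        gcongr a * ?_ ^ s
        linarith [abs_logb_div_le (abs_pos.2 (log_neg hr0 hr1).ne) hs]
    _ ≤ a * (2 ^ (s - 1) * ((|log (|log r|)| / log 2) ^ s + (logb 2 s + 2) ^ s)) := by
        gcongr
        exact add_pow_le (by positivity) hc s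
    _ = _ := by rw [div_pow]; ring

lemma abs_log_abs_log_le_abs_log_one_sub {r : ℝ} (hr : 1 / 2 ≤ r) (hr1 : r < 1) :
    |log (|log r|)| ≤ |log (1 - r)| := by
  have hr0 : 0 < r := by linarith
  have h1r : 0 < 1 - r := by linarith
  have hlower : 1 - r ≤ -log r := by linarith [log_le_sub_one_of_pos hr0]
  have hupper : -log r < 1 := by
    have := log_le_log (by norm_num) hr
    rw [one_div, log_inv] at this
    linarith [log_two_lt_d9]
  rw [abs_of_neg (log_neg hr0 hr1), abs_of_neg (log_neg (h1r.trans_le hlower) hupper),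
    abs_of_neg (log_neg h1r (by linarith))]
  exact neg_le_neg (log_le_log h1r hlower)

lemma log_two_le_abs_log_one_sub {r : ℝ} (hr : 1 / 2 ≤ r) (hr1 : r < 1) :
    log 2 ≤ |log (1 - r)| := by
  have h1r : 0 < 1 - r := by linarith
  have h2 : 2 ≤ (1 - r)⁻¹ := by rw [le_inv_comm₀ two_pos h1r]; linarith
  rw [abs_of_neg (log_neg h1r (by linarith)), ← log_inv]
  exact log_le_log two_pos h2

theorem stmt_18_general (s : ℕ) (hs : 1 ≤ s) (Nf : Fin s → ℕ)
    (h2 : ∀ i, 2 ≤ Nf i) (a : ℝ) (ha : 0 ≤ a) :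
    ∃ a₂ a₃ a₄ : ℝ, 0 ≤ a₂ ∧ 0 ≤ a₃ ∧ 0 ≤ a₄ ∧
      (∀ z : ℂ, ‖z‖ < 1 →
        (∑' ν : Fin s → ℕ, Real.log (1 + a * ‖z‖ ^ (∏ i, Nf i ^ ν i))) ≤
          a₂ + a₃ * (abs (Real.log (abs (Real.log ‖z‖)))) ^ s) ∧
      (∀ z : ℂ, 1 / 2 ≤ ‖z‖ → ‖z‖ < 1 →
        (∑' ν : Fin s → ℕ, Real.log (1 + a * ‖z‖ ^ (∏ i, Nf i ^ ν i))) ≤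
          a₄ * |Real.log (1 - ‖z‖)| ^ s) := by
  obtain ⟨a₂, a₃, ha₂, ha₃, hbound⟩ := exists_tsum_log_one_add_mul_pow_prod_le hs h2 ha
  have hlog2 : 0 < log 2 := log_pos one_lt_two
  refine ⟨a₂, a₃, a₂ / log 2 ^ s + a₃, ha₂, ha₃, by positivity,
    fun z hz => hbound ‖z‖ (norm_nonneg z) hz, fun z hz₁ hz₂ => ?_⟩
  have hT := log_two_le_abs_log_one_sub hz₁ hz₂
  calc _ ≤ a₂ + a₃ * |log (|log ‖z‖|)| ^ s := hbound ‖z‖ (norm_nonneg z) hz₂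
    _ ≤ a₂ * (|log (1 - ‖z‖)| / log 2) ^ s + a₃ * |log (1 - ‖z‖)| ^ s := by
        refine add_le_add (le_mul_of_one_le_right ha₂ (one_le_pow₀ ((one_le_div hlog2).2 hT))) ?_
        gcongr a₃ * ?_ ^ s
        exact abs_log_abs_log_le_abs_log_one_sub hz₁ hz₂
    _ = (a₂ / log 2 ^ s + a₃) * |log (1 - ‖z‖)| ^ s := by rw [div_pow]; ring

/-- Let `𝒮` be the multiplicative monoid generated by pairwise coprime `N₁,…,N_s ≥ 2`
(elements indexed by exponent tuples) and let `a ≥ 0`. Then there are constants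
`a₂, a₃ ≥ 0` with `Σ_{N ∈ 𝒮} log(1 + a|z|^N) ≤ a₂ + a₃·|log|log|z|||^s` for all `z` in
the unit disc, and a constant `a₄ ≥ 0` with
`Σ_{N ∈ 𝒮} log(1 + a|z|^N) ≤ a₄·|log(1 − |z|)|^s` for `1/2 ≤ |z| < 1`. -/
theorem stmt_18 (s : ℕ) (hs : 1 ≤ s) (Nf : Fin s → ℕ)
    (h2 : ∀ i, 2 ≤ Nf i) (hcop : ∀ i j, i ≠ j → Nat.Coprime (Nf i) (Nf j))
    (a : ℝ) (ha : 0 ≤ a) :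
    ∃ a₂ a₃ a₄ : ℝ, 0 ≤ a₂ ∧ 0 ≤ a₃ ∧ 0 ≤ a₄ ∧
      (∀ z : ℂ, ‖z‖ < 1 →
        (∑' ν : Fin s → ℕ, Real.log (1 + a * ‖z‖ ^ (∏ i, Nf i ^ ν i))) ≤
          a₂ + a₃ * (abs (Real.log (abs (Real.log ‖z‖)))) ^ s) ∧
      (∀ z : ℂ, 1 / 2 ≤ ‖z‖ → ‖z‖ < 1 →
        (∑' ν : Fin s → ℕ, Real.log (1 + a * ‖z‖ ^ (∏ i, Nf i ^ ν i))) ≤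
          a₄ * |Real.log (1 - ‖z‖)| ^ s) :=
  stmt_18_general s hs Nf h2 a ha
end
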